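/- arXiv:math/0601624 — 3 statements merged into one kernel-verified Lean document; each statement's English description precedes it below -/
import Mathlib

section
/- The number of Bernoulli bridges of length 2n (paths with ±1 steps starting and ending at 0) having exactly k peaks equals binomial(n,k)^2. -/
/-!
Reading a path as its word of up (`U`) and down (`D`) steps, a bridge of length `2n` is a word
with `n` letters of each kind, and its peaks are the occurrences of the factor `UD` (descents).
Splitting off the first letter, and remembering the letter before it, gives Pascal-type
recurrences for the number of words with `a` letters `U`, `b` letters `D` and `k` descents.
Their solution is `C(a,k) C(b,k)` for words preceded by `D`, and `C(a+1,k) C(b-1,k-1)` (with the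
obvious boundary values) for words preceded by `U`; at `a = b = n` the first is `C(n,k)^2`.
-/

/-- The value at time `i` of the Bernoulli path with `n` steps encoded by
`f : Fin n → Bool` (`true` = step `+1`, `false` = step `-1`), started at `0`. -/
def pathVal {n : ℕ} (f : Fin n → Bool) (i : ℕ) : ℤ :=
  ∑ j ∈ Finset.range i, (if h : j < n then (if f ⟨j, h⟩ then (1 : ℤ) else -1) else 0)

/-- `x` is a peak: `1 ≤ x ≤ n-1` and `S(x-1) = S(x+1) = S(x) - 1`. -/
def IsPeak {n : ℕ} (f : Fin n → Bool) (x : ℕ) : Prop :=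
  0 < x ∧ x < n ∧ pathVal f x = pathVal f (x - 1) + 1 ∧
    pathVal f (x + 1) = pathVal f x - 1

instance {n : ℕ} (f : Fin n → Bool) (x : ℕ) : Decidable (IsPeak f x) := by
  unfold IsPeak; infer_instance

def numPeaks {n : ℕ} (f : Fin n → Bool) : ℕ :=
  ((Finset.range n).filter (fun x => IsPeak f x)).card

open Finset

def numTrue {m : ℕ} (f : Fin m → Bool) : ℕ := #{i | f i = true}

def numDescents {m : ℕ} (f : Fin (m + 1) → Bool) : ℕ :=
  #{i : Fin m | f i.castSucc = true ∧ f i.succ = false}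

theorem card_filter_fin_cons {α : Type*} [Fintype α] {m : ℕ}
    (p : (Fin (m + 1) → α) → Prop) [DecidablePred p] :
    #{f | p f} = ∑ x, #{g : Fin m → α | p (Fin.cons x g)} := by
  simp only [card_filter]
  rw [← Fintype.sum_prod_type']
  exact (Fintype.sum_equiv (Fin.consEquiv fun _ => α) _ _ fun _ => rfl).symm

theorem numTrue_cons {m : ℕ} (x : Bool) (g : Fin m → Bool) :
    numTrue (Fin.cons x g : Fin (m + 1) → Bool) = x.toNat + numTrue g := by
  simp only [numTrue, card_filter, Fin.sum_univ_succ, Fin.cons_zero, Fin.cons_succ]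
  cases x <;> rfl

theorem numDescents_cons {m : ℕ} (c : Bool) (g : Fin (m + 1) → Bool) :
    numDescents (Fin.cons c g : Fin (m + 2) → Bool) = (c && !g 0).toNat + numDescents g := by
  simp only [numDescents, card_filter, Fin.sum_univ_succ, Fin.cons_zero, Fin.cons_succ,
    Fin.castSucc_zero, ← Fin.succ_castSucc]
  cases c <;> cases g 0 <;> simp

theorem numTrue_le {m : ℕ} (f : Fin m → Bool) : numTrue f ≤ m :=
  (card_le_univ _).trans_eq (Fintype.card_fin m)

theorem pathVal_succ {m : ℕ} (f : Fin m → Bool) (i : Fin m) :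
    pathVal f (i + 1) = pathVal f i + if f i then 1 else -1 := by
  simp [pathVal, sum_range_succ, i.isLt]

theorem pathVal_eq_two_mul_numTrue_sub {m : ℕ} (f : Fin m → Bool) :
    pathVal f m = 2 * numTrue f - m := by
  have step : ∀ i : Fin m, (if f i then (1 : ℤ) else -1) = 2 * (if f i then 1 else 0) - 1 := by
    intro i; cases f i <;> simp
  rw [pathVal, sum_range fun j => if h : j < m then _ else _]
  simp only [Fin.is_lt, dif_pos, Fin.eta, step, sum_sub_distrib, ← mul_sum, sum_boole, numTrue]
  simp

theorem pathVal_eq_zero_iff {n : ℕ} (f : Fin (2 * n) → Bool) :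
    pathVal f (2 * n) = 0 ↔ numTrue f = n := by
  rw [pathVal_eq_two_mul_numTrue_sub]; omega

theorem isPeak_iff {m : ℕ} (f : Fin m → Bool) (i : Fin m) :
    IsPeak f i ↔ (Fin.cons false f : Fin (m + 1) → Bool) i.castSucc = true ∧ f i = false := by
  obtain ⟨_ | j, hj⟩ := i
  · simp [IsPeak]
  · have hcons : (Fin.cons false f : Fin (m + 1) → Bool) (Fin.castSucc ⟨j + 1, hj⟩) =
        f ⟨j, by omega⟩ :=
      Fin.cons_succ (α := fun _ => Bool) false f ⟨j, by omega⟩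
    have h1 := pathVal_succ f ⟨j, by omega⟩
    have h2 := pathVal_succ f ⟨j + 1, hj⟩
    simp only at h1 h2
    rw [hcons]
    simp only [IsPeak, Nat.add_sub_cancel, h1, h2]
    cases f ⟨j, _⟩ <;> cases f ⟨j + 1, hj⟩ <;> simp [hj, add_assoc]

-- Prefixing a down step turns position `0`, never a peak, into a position like all others.
theorem numPeaks_eq_numDescents {m : ℕ} (f : Fin m → Bool) :
    numPeaks f = numDescents (Fin.cons false f : Fin (m + 1) → Bool) := by
  rw [numPeaks, numDescents, card_filter, card_filter,
    sum_range fun x => if IsPeak f x then 1 else 0]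
  simp only [isPeak_iff, Fin.cons_succ]

-- `c` is the letter preceding `g`: the recursion on the first letter of `g` needs it.
def numWordsAfter (c : Bool) (m a k : ℕ) : ℕ :=
  #{g : Fin m → Bool | numTrue g = a ∧ numDescents (Fin.cons c g : Fin (m + 1) → Bool) = k}

theorem numWordsAfter_zero (c : Bool) (a k : ℕ) :
    numWordsAfter c 0 a k = if a = 0 ∧ k = 0 then 1 else 0 := by
  have hg (g : Fin 0 → Bool) :
      numTrue g = 0 ∧ numDescents (Fin.cons c g : Fin 1 → Bool) = 0 := by
    simp [numTrue, numDescents]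
  rw [numWordsAfter]
  split_ifs with h
  · simp [h, hg]
  · simp [hg]
    omega

theorem numWordsAfter_eq_zero_of_lt {c : Bool} {m a : ℕ} (h : m < a) (k : ℕ) :
    numWordsAfter c m a k = 0 := by
  simp only [numWordsAfter, card_eq_zero, filter_eq_empty_iff]
  intro g _ ⟨hg, _⟩
  have := numTrue_le g
  omega

theorem numWordsAfter_succ (c : Bool) (m a k : ℕ) :
    numWordsAfter c (m + 1) a k =
      (if a = 0 then 0 else numWordsAfter true m (a - 1) k) +
        (if c = true ∧ k = 0 then 0 else numWordsAfter false m a (k - c.toNat)) := by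
  rw [numWordsAfter, card_filter_fin_cons, Fintype.sum_bool]
  simp only [numTrue_cons, numDescents_cons, Fin.cons_zero]
  congr 1
  · split_ifs with ha
    · simp [ha]
    · simp only [numWordsAfter]
      congr! 2
      simp
      omega
  · split_ifs with hc
    · obtain ⟨rfl, rfl⟩ := hc
      simp
    · simp only [numWordsAfter]
      congr! 2
      cases c <;> simp_all
      omega

def upWordCount : ℕ → ℕ → ℕ → ℕ
  | _, 0, 0 => 1
  | _, 0, _ + 1 => 0
  | _, _ + 1, 0 => 0
  | a, b + 1, k + 1 => (a + 1).choose (k + 1) * b.choose k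

theorem numWordsAfter_eq {m a b : ℕ} (hab : a + b = m) (k : ℕ) :
    numWordsAfter false m a k = a.choose k * b.choose k ∧
      numWordsAfter true m a k = upWordCount a b k := by
  induction m generalizing a b k with
  | zero =>
    obtain ⟨rfl, rfl⟩ : a = 0 ∧ b = 0 := by omega
    cases k <;> simp [numWordsAfter_zero, upWordCount]
  | succ m ih =>
    rw [numWordsAfter_succ, numWordsAfter_succ]
    rcases a with _ | a
    · obtain rfl : b = m + 1 := by omega
      rcases k with _ | _ | k <;>
        simp [ih (zero_add m), upWordCount, Nat.choose_eq_zero_iff]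
    rcases b with _ | b
    · obtain rfl : a = m := by omega
      rcases k with _ | k <;>
        simp [ih (add_zero a), numWordsAfter_eq_zero_of_lt (lt_add_one a), upWordCount]
    have ih_up := ih (a := a) (b := b + 1) (by omega)
    have ih_down := ih (a := a + 1) (b := b) (by omega)
    rcases k with _ | k
    · simp [ih_up, ih_down, upWordCount]
    · simp [ih_up, ih_down, upWordCount, Nat.choose_succ_succ' (a + 1), Nat.choose_succ_succ' b]
      constructor <;> ring

/-- The number of Bernoulli bridges of length `2n` with exactly `k` peaks is
`binomial(n,k)^2`. -/
theorem card_bridges_with_k_peaks (n k : ℕ) :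
    ((Finset.univ : Finset (Fin (2 * n) → Bool)).filter
        (fun f => pathVal f (2 * n) = 0 ∧ numPeaks f = k)).card
      = (n.choose k) ^ 2 := by
  have h := (numWordsAfter_eq (two_mul n).symm k).1
  rw [numWordsAfter, ← sq] at h
  simpa only [pathVal_eq_zero_iff, numPeaks_eq_numDescents] using h
end

section
/- For x≥1, y≥1, l≥0, j≥0, the number of nonnegative Bernoulli paths of length l from x to y with exactly j peaks, starting with a down step and ending with an up step, equals G(l,j,j,x,y) - G(l,j,j,-x,y), where G(l,j1,j2,x,y)=binomial((l+y-x)/2-1, j1)·binomial((l-y+x)/2-1, j2). -/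
/-- Integer binomial coefficient with the convention that it vanishes unless
`0 ≤ p ≤ m`. -/
def ichoose (m p : ℤ) : ℤ :=
  if 0 ≤ m ∧ 0 ≤ p then ((m.toNat).choose p.toNat : ℤ) else 0

/-- `hchoose num p = binomial (num/2 - 1) p`, with the convention that it
vanishes when `num` is odd (non-integer upper argument) or when the arguments
are out of range. -/
def hchoose (num p : ℤ) : ℤ :=
  if 2 ∣ num then ichoose (num / 2 - 1) p else 0

/-- `G(l,j₁,j₂,x,y) = binomial((l+y-x)/2 - 1, j₁) · binomial((l-y+x)/2 - 1, j₂)`. -/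
def G (l j1 j2 x y : ℤ) : ℤ := hchoose (l + y - x) j1 * hchoose (l - y + x) j2

/-- The path started at `x` stays nonnegative on `[0, n]`. -/
def IsNonnegFrom {n : ℕ} (x : ℤ) (f : Fin n → Bool) : Prop :=
  ∀ i ∈ Finset.range (n + 1), 0 ≤ x + pathVal f i

instance {n : ℕ} (x : ℤ) (f : Fin n → Bool) : Decidable (IsNonnegFrom x f) := by
  unfold IsNonnegFrom; infer_instance

/-!
Write `P(l, j, x)` for the number of nonnegative paths of length `l` from `x` to `y` with `j`
peaks that end with an up step. Deleting the first step of a path that starts with a down step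
leaves a path counted by `P(l - 1, j, x - 1)`. Sorting the paths counted by `P` by their first
step (an up step followed by a down step is a new peak) gives, for `x ≥ 0`,
`P(l + 2, j, x) = P(l + 1, j, x - 1) + P(l + 1, j, x + 1) - P(l, j, x) + P(l, j - 1, x)`.
Pascal's rule, applied to both factors of `G`, shows that `G(l, j, j, x, y)` satisfies the same
recurrence, and since `x ↦ -x` exchanges `x - 1` and `x + 1` so does the reflected difference
`G(l, j, j, x, y) - G(l, j, j, -x, y)`. The difference vanishes at `x = 0`, which is exactly the
boundary condition of nonnegative paths, and an induction on `l` finishes the proof.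
-/

open Finset

lemma ichoose_of_neg_left {m p : ℤ} (h : m < 0) : ichoose m p = 0 := by
  rw [ichoose, if_neg (by omega)]

lemma ichoose_of_neg_right {m p : ℤ} (h : p < 0) : ichoose m p = 0 := by
  rw [ichoose, if_neg (by omega)]

lemma ichoose_zero_right (m : ℤ) : ichoose m 0 = if 0 ≤ m then 1 else 0 := by
  simp [ichoose]

lemma ichoose_zero_left (p : ℤ) : ichoose 0 p = if p = 0 then 1 else 0 := by
  rcases lt_trichotomy p 0 with hp | rfl | hp
  · rw [ichoose_of_neg_right hp, if_neg hp.ne]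
  · simp [ichoose]
  · rw [ichoose, if_pos ⟨le_rfl, hp.le⟩, if_neg hp.ne', Nat.choose_eq_zero_of_lt (by omega)]
    rfl

lemma ichoose_pascal {m p : ℤ} (h : m ≠ 0 ∨ p ≠ 0) :
    ichoose m p = ichoose (m - 1) p + ichoose (m - 1) (p - 1) := by
  rcases lt_or_ge p 0 with hp | hp
  · simp [ichoose_of_neg_right, hp, show p - 1 < 0 by omega]
  rcases lt_or_ge m 0 with hm | hm
  · simp [ichoose_of_neg_left, hm, show m - 1 < 0 by omega]
  obtain rfl | hp := hp.eq_or_lt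
  · simp [ichoose_zero_right, ichoose_of_neg_right]
    omega
  obtain rfl | hm := hm.eq_or_lt
  · simp [ichoose_zero_left, ichoose_of_neg_left, hp.ne']
  have hm' : m.toNat = (m - 1).toNat + 1 := by omega
  have hp' : p.toNat = (p - 1).toNat + 1 := by omega
  simp only [ichoose, if_pos (And.intro hm.le hp.le), hm', hp', Nat.choose_succ_succ',
    if_pos (show 0 ≤ m - 1 ∧ 0 ≤ p by omega), if_pos (show 0 ≤ m - 1 ∧ 0 ≤ p - 1 by omega)]
  push_cast
  ring

lemma ichoose_mul_ichoose_pascal {m n : ℤ} (p : ℤ) (h : m ≠ 0 ∨ n ≠ 0) :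
    ichoose m p * ichoose n p =
      ichoose m p * ichoose (n - 1) p + ichoose (m - 1) p * ichoose n p
        - ichoose (m - 1) p * ichoose (n - 1) p + ichoose (m - 1) (p - 1) * ichoose (n - 1) (p - 1) := by
  by_cases hp : p = 0
  · subst hp
    simp only [ichoose_zero_right, ichoose_of_neg_right (show (0 : ℤ) - 1 < 0 by omega)]
    split_ifs <;> omega
  · rw [ichoose_pascal (m := m) (Or.inr hp), ichoose_pascal (m := n) (Or.inr hp)]
    ring

lemma hchoose_two_mul (c p : ℤ) : hchoose (2 * c) p = ichoose (c - 1) p := by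
  rw [hchoose, if_pos (dvd_mul_right 2 c), Int.mul_ediv_cancel_left c two_ne_zero]

lemma hchoose_of_not_dvd {a : ℤ} (p : ℤ) (h : ¬ 2 ∣ a) : hchoose a p = 0 := by
  rw [hchoose, if_neg h]

lemma hchoose_of_le_one {a : ℤ} (p : ℤ) (h : a ≤ 1) : hchoose a p = 0 := by
  by_cases ha : 2 ∣ a
  · obtain ⟨c, rfl⟩ := ha
    rw [hchoose_two_mul, ichoose_of_neg_left (by omega)]
  · exact hchoose_of_not_dvd p ha

lemma hchoose_two (p : ℤ) : hchoose 2 p = if p = 0 then 1 else 0 := by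
  rw [show (2 : ℤ) = 2 * 1 by rfl, hchoose_two_mul, sub_self, ichoose_zero_left]

lemma hchoose_mul_hchoose_pascal {a b : ℤ} (p : ℤ) (h : a ≠ 2 ∨ b ≠ 2) :
    hchoose a p * hchoose b p =
      hchoose a p * hchoose (b - 2) p + hchoose (a - 2) p * hchoose b p
        - hchoose (a - 2) p * hchoose (b - 2) p + hchoose (a - 2) (p - 1) * hchoose (b - 2) (p - 1) := by
  by_cases ha : 2 ∣ a
  · by_cases hb : 2 ∣ b
    · obtain ⟨c, rfl⟩ := ha
      obtain ⟨d, rfl⟩ := hb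
      rw [show 2 * c - 2 = 2 * (c - 1) by ring, show 2 * d - 2 = 2 * (d - 1) by ring]
      simp only [hchoose_two_mul]
      exact ichoose_mul_ichoose_pascal p (by omega)
    · simp [hchoose_of_not_dvd _ hb, hchoose_of_not_dvd _ (show ¬ 2 ∣ b - 2 by omega)]
  · simp [hchoose_of_not_dvd _ ha, hchoose_of_not_dvd _ (show ¬ 2 ∣ a - 2 by omega)]

lemma G_eq_zero_of_le_one {l : ℤ} (p q x y : ℤ) (hl : l ≤ 1) : G l p q x y = 0 := by
  rcases le_or_gt (l + y - x) 1 with h | h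
  · rw [G, hchoose_of_le_one p h, zero_mul]
  · rw [G, hchoose_of_le_one q (by omega), mul_zero]

lemma G_two (p x y : ℤ) : G 2 p p x y = if x = y ∧ p = 0 then 1 else 0 := by
  rcases lt_trichotomy x y with h | rfl | h
  · rw [G, hchoose_of_le_one p (show 2 - y + x ≤ 1 by omega), mul_zero, if_neg (by omega)]
  · rw [G, add_sub_cancel_right, sub_add_cancel, hchoose_two]
    split_ifs <;> simp_all
  · rw [G, hchoose_of_le_one p (show 2 + y - x ≤ 1 by omega), zero_mul, if_neg (by omega)]

lemma G_add_two {l : ℤ} (p x y : ℤ) (hl : l ≠ 0) :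
    G (l + 2) p p x y =
      G (l + 1) p p (x - 1) y + G (l + 1) p p (x + 1) y - G l p p x y + G l (p - 1) (p - 1) x y := by
  have h := hchoose_mul_hchoose_pascal p (a := l + 2 + y - x) (b := l + 2 - y + x) (by omega)
  simp only [G]
  convert h using 3 <;> ring_nf

def Grefl (l p x y : ℤ) : ℤ := G l p p x y - G l p p (-x) y

lemma Grefl_add_two {l : ℤ} (p x y : ℤ) (hl : l ≠ 0) :
    Grefl (l + 2) p x y =
      Grefl (l + 1) p (x - 1) y + Grefl (l + 1) p (x + 1) y - Grefl l p x y + Grefl l (p - 1) x y := by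
  have h := G_add_two p (-x) y hl
  rw [show -x - 1 = -(x + 1) by ring, show -x + 1 = -(x - 1) by ring] at h
  simp only [Grefl, G_add_two p x y hl, h]
  ring

def stepVal (b : Bool) : ℤ := if b then 1 else -1

section Paths

variable {n : ℕ}

@[simp]
lemma pathVal_zero (f : Fin n → Bool) : pathVal f 0 = 0 := by
  simp [pathVal]

lemma pathVal_cons_succ (b : Bool) (g : Fin n → Bool) (i : ℕ) :
    pathVal (Fin.cons b g) (i + 1) = stepVal b + pathVal g i := by
  rw [pathVal, sum_range_succ', add_comm]
  congr 1
  refine sum_congr rfl fun k _ => ?_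
  by_cases hk : k < n
  · rw [dif_pos hk, dif_pos (Nat.succ_lt_succ hk)]
    rfl
  · rw [dif_neg hk, dif_neg (by omega)]

@[simp]
lemma pathVal_cons_one (b : Bool) (g : Fin n → Bool) : pathVal (Fin.cons b g) 1 = stepVal b := by
  simpa using pathVal_cons_succ b g 0

lemma pathVal_of_len_zero (g : Fin 0 → Bool) (i : ℕ) : pathVal g i = 0 := by
  simp [pathVal]

lemma IsNonnegFrom.nonneg {x : ℤ} {f : Fin n → Bool} (h : IsNonnegFrom x f) : 0 ≤ x := by
  simpa using h 0 (by simp)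

lemma isNonnegFrom_cons {x : ℤ} (b : Bool) (g : Fin n → Bool) :
    IsNonnegFrom x (Fin.cons b g) ↔ 0 ≤ x ∧ IsNonnegFrom (x + stepVal b) g := by
  refine ⟨fun h => ⟨h.nonneg, fun i hi => ?_⟩, fun ⟨hx, h⟩ i hi => ?_⟩
  · have := h (i + 1) (by simp_all)
    rwa [pathVal_cons_succ, ← add_assoc] at this
  · cases i with
    | zero => simpa using hx
    | succ i =>
      rw [pathVal_cons_succ, ← add_assoc]
      exact h i (by simp_all)

lemma isNonnegFrom_of_len_zero (x : ℤ) (g : Fin 0 → Bool) : IsNonnegFrom x g ↔ 0 ≤ x := by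
  simp [IsNonnegFrom, pathVal_of_len_zero]

lemma numPeaks_of_len_zero (g : Fin 0 → Bool) : numPeaks g = 0 := rfl

lemma not_isPeak_zero (f : Fin n → Bool) : ¬ IsPeak f 0 := fun h => h.1.false

lemma isPeak_cons_one (b : Bool) (g : Fin n → Bool) :
    IsPeak (Fin.cons b g) 1 ↔ b = true ∧ pathVal g 1 = -1 := by
  cases n with
  | zero => simp [IsPeak, pathVal_of_len_zero]
  | succ n =>
    cases b <;> simp [IsPeak, pathVal_cons_succ, stepVal]
    omega

lemma isPeak_cons_succ_succ (b : Bool) (g : Fin n → Bool) (k : ℕ) :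
    IsPeak (Fin.cons b g) (k + 2) ↔ IsPeak g (k + 1) := by
  simp only [IsPeak, pathVal_cons_succ, Nat.add_sub_cancel, show k + 2 = (k + 1) + 1 from rfl]
  omega

lemma numPeaks_cons (b : Bool) (g : Fin n → Bool) :
    numPeaks (Fin.cons b g) = numPeaks g + if b = true ∧ pathVal g 1 = -1 then 1 else 0 := by
  cases n with
  | zero => simp [numPeaks, pathVal_of_len_zero, not_isPeak_zero]
  | succ n =>
    simp only [numPeaks, card_filter, sum_range_succ' _ (n + 1), sum_range_succ' _ n,
      isPeak_cons_succ_succ, not_isPeak_zero]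
    simp [isPeak_cons_one]

end Paths

lemma card_eq_card_cons_false_add_card_cons_true {n : ℕ} (s : Finset (Fin (n + 1) → Bool)) :
    #s = #{g | Fin.cons false g ∈ s} + #{g | Fin.cons true g ∈ s} := by
  conv_lhs => rw [← filter_univ_mem s]
  simp only [card_filter]
  rw [← (Fin.consEquiv fun _ => Bool).sum_comp, Fintype.sum_prod_type, Fintype.sum_bool, add_comm]
  rfl

-- The peak count is compared in `ℤ`, so that `j - 1` does not truncate at `j = 0`.
def nonnegUpPaths (l : ℕ) (j x y : ℤ) : Finset (Fin l → Bool) :=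
  {f | x + pathVal f l = y ∧ IsNonnegFrom x f ∧ pathVal f l - pathVal f (l - 1) = 1 ∧
    (numPeaks f : ℤ) = j}

section nonnegUpPaths

variable {l : ℕ} {j x y : ℤ}

lemma nonnegUpPaths_zero : nonnegUpPaths 0 j x y = ∅ := by
  ext f; simp [nonnegUpPaths]

lemma nonneg_of_mem_nonnegUpPaths {f : Fin l → Bool} (hf : f ∈ nonnegUpPaths l j x y) : 0 ≤ x := by
  simp only [nonnegUpPaths, mem_filter] at hf
  exact hf.2.2.1.nonneg

lemma nonnegUpPaths_of_neg (hx : x < 0) : nonnegUpPaths l j x y = ∅ :=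
  eq_empty_of_forall_notMem fun _ hf => hx.not_ge (nonneg_of_mem_nonnegUpPaths hf)

lemma cons_mem_nonnegUpPaths (hl : l ≠ 0) (b : Bool) (g : Fin l → Bool) :
    Fin.cons b g ∈ nonnegUpPaths (l + 1) j x y ↔
      0 ≤ x ∧ g ∈ nonnegUpPaths l (j - if b = true ∧ pathVal g 1 = -1 then 1 else 0)
        (x + stepVal b) y := by
  obtain ⟨k, rfl⟩ := Nat.exists_eq_succ_of_ne_zero hl
  simp only [nonnegUpPaths, mem_filter, mem_univ, true_and, isNonnegFrom_cons,
    numPeaks_cons, pathVal_cons_succ, Nat.succ_sub_one]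
  push_cast
  constructor
  · rintro ⟨hend, ⟨hx, hnonneg⟩, hup, hpeaks⟩
    exact ⟨hx, by linarith, hnonneg, by linarith, by linarith⟩
  · rintro ⟨hx, hend, hnonneg, hup, hpeaks⟩
    exact ⟨by linarith, ⟨hx, hnonneg⟩, by linarith, by linarith⟩

-- Stated at length `0 + 1`, the form in which `card_eq_card_cons_false_add_card_cons_true`
-- produces it.
lemma cons_mem_nonnegUpPaths_one (b : Bool) (g : Fin 0 → Bool) :
    Fin.cons b g ∈ nonnegUpPaths (0 + 1) j x y ↔ 0 ≤ x ∧ b = true ∧ x + 1 = y ∧ j = 0 := by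
  simp only [nonnegUpPaths, mem_filter, mem_univ, true_and, isNonnegFrom_cons, numPeaks_cons,
    Nat.sub_self, pathVal_zero, pathVal_of_len_zero,
    isNonnegFrom_of_len_zero, numPeaks_of_len_zero]
  cases b <;> simp [stepVal]
  omega

lemma card_nonnegUpPaths_one (hx : 0 ≤ x) :
    #(nonnegUpPaths 1 j x y) = if x + 1 = y ∧ j = 0 then 1 else 0 := by
  rw [card_eq_card_cons_false_add_card_cons_true]
  simp only [cons_mem_nonnegUpPaths_one, hx, true_and]
  split_ifs <;> simp_all

lemma card_filter_startsDown :
    #{f ∈ nonnegUpPaths (l + 1) j x y | pathVal f 1 = -1} = #(nonnegUpPaths l j (x - 1) y) := by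
  rcases eq_or_ne l 0 with rfl | hl
  · rw [nonnegUpPaths_zero, card_empty, card_eq_zero, filter_eq_empty_iff]
    intro f hf
    simp [nonnegUpPaths] at hf
    omega
  rw [card_eq_card_cons_false_add_card_cons_true]
  simp only [mem_filter, cons_mem_nonnegUpPaths hl, pathVal_cons_one, Bool.false_eq_true,
    false_and, ↓reduceIte, sub_zero, stepVal, ← sub_eq_add_neg, and_true, true_and, reduceCtorEq,
    and_false, filter_false, card_empty, add_zero]
  congr 1
  ext g
  simpa using fun hg => by linarith [nonneg_of_mem_nonnegUpPaths hg]

lemma card_filter_not_startsDown (hl : l ≠ 0) (hx : 0 ≤ x) :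
    #{f ∈ nonnegUpPaths (l + 1) j x y | ¬ pathVal f 1 = -1} =
      #{f ∈ nonnegUpPaths l j (x + 1) y | ¬ pathVal f 1 = -1} +
        #{f ∈ nonnegUpPaths l (j - 1) (x + 1) y | pathVal f 1 = -1} := by
  rw [card_eq_card_cons_false_add_card_cons_true]
  simp only [mem_filter, cons_mem_nonnegUpPaths hl, pathVal_cons_one, hx, Bool.false_eq_true,
    false_and, ↓reduceIte, sub_zero, stepVal, true_and, not_true_eq_false, and_false, filter_false,
    card_empty, reduceCtorEq, not_false_eq_true, and_true, zero_add]
  rw [← card_filter_add_card_filter_not (p := fun g => pathVal g 1 = -1), add_comm]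
  congr 2 <;> ext g <;> by_cases hg : pathVal g 1 = -1 <;> simp [hg]

lemma card_nonnegUpPaths_add_two (hx : 0 ≤ x) :
    (#(nonnegUpPaths (l + 2) j x y) : ℤ) =
      #(nonnegUpPaths (l + 1) j (x - 1) y) + #(nonnegUpPaths (l + 1) j (x + 1) y)
        - #(nonnegUpPaths l j x y) + #(nonnegUpPaths l (j - 1) x y) := by
  have h₁ := card_filter_add_card_filter_not (s := nonnegUpPaths (l + 2) j x y)
    (fun f => pathVal f 1 = -1)
  have h₂ := card_filter_add_card_filter_not (s := nonnegUpPaths (l + 1) j (x + 1) y)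
    (fun f => pathVal f 1 = -1)
  have h₃ := card_filter_startsDown (l := l) (j := j - 1) (x := x + 1) (y := y)
  rw [card_filter_startsDown, card_filter_not_startsDown (by omega : l + 1 ≠ 0) hx] at h₁
  rw [card_filter_startsDown] at h₂
  rw [add_sub_cancel_right] at h₂ h₃
  omega

end nonnegUpPaths

-- Prepending a down step turns these paths into the paths of the main theorem, of length
-- `l + 1` from `x + 1`.
theorem card_nonnegUpPaths (l : ℕ) (j : ℤ) {x y : ℤ} (hx : 0 ≤ x) (hy : 0 ≤ y) :
    (#(nonnegUpPaths l j x y) : ℤ) = Grefl (l + 1) j (x + 1) y := by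
  induction l using Nat.twoStepInduction generalizing j x with
  | zero => simp [nonnegUpPaths_zero, Grefl, G_eq_zero_of_le_one]
  | one =>
    rw [card_nonnegUpPaths_one hx]
    simp only [Grefl, Nat.cast_one, one_add_one_eq_two, G_two]
    split_ifs <;> omega
  | more l ih₀ ih₁ =>
    have h₁ : (#(nonnegUpPaths (l + 1) j (x - 1) y) : ℤ) = Grefl (l + 2) j x y := by
      rcases hx.eq_or_lt with rfl | hx
      · simp [nonnegUpPaths_of_neg, Grefl]
      · simpa [add_assoc] using ih₁ j (x := x - 1) (by omega)
    have h₂ := ih₁ j (x := x + 1) (by omega)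
    have hrec := Grefl_add_two j (x + 1) y (show (l : ℤ) + 1 ≠ 0 by omega)
    push_cast at h₂ hrec ⊢
    rw [card_nonnegUpPaths_add_two hx, h₁, h₂, ih₀ j hx, ih₀ (j - 1) hx]
    rw [add_sub_cancel_right] at hrec
    rw [show (l : ℤ) + 2 + 1 = l + 1 + 2 by ring, hrec, show (l : ℤ) + 1 + 1 = l + 2 by ring]

/-- For `x ≥ 1`, `y ≥ 1`, the number of nonnegative Bernoulli paths of length
`l` from `x` to `y` with exactly `j` peaks, starting with a down step and
ending with an up step, equals `G(l,j,j,x,y) - G(l,j,j,-x,y)`. -/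
theorem card_nonneg_paths_du (l j : ℕ) (x y : ℤ) (hx : 1 ≤ x) (hy : 1 ≤ y) :
    (((Finset.univ : Finset (Fin l → Bool)).filter
        (fun f => x + pathVal f l = y ∧ IsNonnegFrom x f ∧
          pathVal f 1 = -1 ∧ pathVal f l - pathVal f (l - 1) = 1 ∧
          numPeaks f = j)).card : ℤ)
      = G l j j x y - G l j j (-x) y := by
  have hset : (Finset.univ.filter fun f : Fin l → Bool => x + pathVal f l = y ∧
      IsNonnegFrom x f ∧ pathVal f 1 = -1 ∧ pathVal f l - pathVal f (l - 1) = 1 ∧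
      numPeaks f = j) = {f ∈ nonnegUpPaths l j x y | pathVal f 1 = -1} := by
    ext f
    simp only [nonnegUpPaths, mem_filter, mem_univ, true_and, Nat.cast_inj]
    tauto
  rw [hset]
  cases l with
  | zero => simp [nonnegUpPaths_zero, G_eq_zero_of_le_one]
  | succ l =>
    rw [card_filter_startsDown, card_nonnegUpPaths l j (by omega) (by omega), Grefl,
      sub_add_cancel, Nat.cast_succ]
end

section
/- For a Bernoulli path S of length n and H = Φ_n(S) the associated simple chain, the number of peaks of S in [0,j] equals ⌊H_{j+1}/2⌋ for every j in [0,n]. -/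
/-- The extended step sequence of the path encoded by `f`: `ΔS_i` for
`1 ≤ i ≤ n` is the `i`-th step, with the conventions `ΔS_0 = -1` (`false`)
and `ΔS_i = +1` (`true`) for `i ≥ n + 1`. -/
def stepExt {n : ℕ} (f : Fin n → Bool) (i : ℕ) : Bool :=
  if h : 1 ≤ i ∧ i ≤ n then f ⟨i - 1, by omega⟩ else decide (n + 1 ≤ i)

/-- The map `Φₙ` from Bernoulli paths with `n` steps to simple chains with
`n+1` steps (encoded by their 0/1 increments): `ΔH_i = 1` iff
`ΔS_i ≠ ΔS_{i-1}`, with `ΔS_0 = -1`, `ΔS_{n+1} = +1`. -/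
def Phi {n : ℕ} (f : Fin n → Bool) : Fin (n + 1) → Bool :=
  fun i => stepExt f ((i : ℕ) + 1) != stepExt f (i : ℕ)

/-- The value `H_j` of the simple chain encoded by the 0/1 increments `g`. -/
def chainVal {n : ℕ} (g : Fin (n + 1) → Bool) (j : ℕ) : ℕ :=
  ∑ i ∈ Finset.range j, (if h : i < n + 1 then (if g ⟨i, h⟩ then 1 else 0) else 0)

/-!
With `ΔS_0 = -1` and `ΔS_{n+1} = +1`, a peak is exactly an index `x` with `ΔS_x = +1` and
`ΔS_{x+1} = -1`, i.e. a descent of the extended step sequence, and `H` counts its changes of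
sign. Since that sequence starts at `-1`, up to time `j` its changes pair up into an ascent
followed by a descent, plus one unpaired ascent when `ΔS_{j+1} = +1`.
-/

open Finset

lemma sum_range_bne_succ_eq (b : ℕ → Bool) (hb : b 0 = false) (j : ℕ) :
    ∑ i ∈ range j, (if b (i + 1) != b i then 1 else 0)
      = 2 * #{i ∈ range j | b i = true ∧ b (i + 1) = false} + (b j).toNat := by
  induction j with
  | zero => simp [hb]
  | succ j ih =>
    rw [sum_range_succ, ih, range_add_one, filter_insert]
    cases b j <;> cases b (j + 1) <;> simp [card_insert_of_notMem, mul_add, add_assoc]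

section Path

variable {n : ℕ} (f : Fin n → Bool)

lemma pathVal_succ_of_lt {k : ℕ} (hk : k < n) :
    pathVal f (k + 1) = pathVal f k + if f ⟨k, hk⟩ then 1 else -1 := by
  rw [pathVal, sum_range_succ, dif_pos hk, ← pathVal]

lemma stepExt_zero : stepExt f 0 = false := by
  simp [stepExt]

lemma stepExt_succ_of_lt {k : ℕ} (hk : k < n) : stepExt f (k + 1) = f ⟨k, hk⟩ := by
  simp [stepExt, Nat.succ_le_of_lt hk]

lemma stepExt_of_length_lt {x : ℕ} (hx : n < x) : stepExt f x = true := by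
  simp [stepExt, Nat.succ_le_of_lt hx, Nat.not_le_of_lt hx]

lemma isPeak_iff_stepExt (x : ℕ) :
    IsPeak f x ↔ stepExt f x = true ∧ stepExt f (x + 1) = false := by
  rcases Nat.eq_zero_or_pos x with rfl | hx0
  · simp [IsPeak, stepExt_zero]
  rcases lt_or_ge x n with hxn | hnx
  · obtain ⟨k, rfl⟩ : ∃ k, x = k + 1 := Nat.exists_eq_succ_of_ne_zero hx0.ne'
    simp only [IsPeak, hx0, hxn, true_and, Nat.add_sub_cancel,
      pathVal_succ_of_lt f hxn, pathVal_succ_of_lt f (Nat.lt_of_succ_lt hxn),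
      stepExt_succ_of_lt f hxn, stepExt_succ_of_lt f (Nat.lt_of_succ_lt hxn)]
    cases f ⟨k, _⟩ <;> cases f ⟨k + 1, _⟩ <;> grind
  · simp [IsPeak, stepExt_of_length_lt f (Nat.lt_succ_of_le hnx), Nat.not_lt_of_le hnx]

lemma filter_le_isPeak_eq {j : ℕ} :
    {x ∈ range n | x ≤ j ∧ IsPeak f x}
      = {i ∈ range (j + 1) | stepExt f i = true ∧ stepExt f (i + 1) = false} := by
  ext x
  simp only [mem_filter, mem_range, isPeak_iff_stepExt, Nat.lt_succ_iff]
  refine ⟨fun ⟨_, hxj, hpeak⟩ => ⟨hxj, hpeak⟩, fun ⟨hxj, hpeak⟩ => ⟨?_, hxj, hpeak⟩⟩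
  by_contra! hnx
  simp [stepExt_of_length_lt f (Nat.lt_succ_of_le hnx)] at hpeak

lemma chainVal_Phi {j : ℕ} (hj : j ≤ n + 1) :
    chainVal (Phi f) j = ∑ i ∈ range j, if stepExt f (i + 1) != stepExt f i then 1 else 0 := by
  refine sum_congr rfl fun i hi => ?_
  rw [dif_pos (lt_of_lt_of_le (mem_range.mp hi) hj)]
  rfl

end Path

/-- For a Bernoulli path `S` with `H = Φₙ(S)`, the number of peaks of `S` in
`[0, j]` equals `⌊H_{j+1} / 2⌋`, for every `j ∈ [0, n]`. -/
theorem peaks_upTo_eq_chainVal (n : ℕ) (f : Fin n → Bool) (j : ℕ) (hj : j ≤ n) :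
    ((Finset.range n).filter (fun x => x ≤ j ∧ IsPeak f x)).card
      = chainVal (Phi f) (j + 1) / 2 := by
  rw [filter_le_isPeak_eq, chainVal_Phi f (Nat.add_le_add_right hj 1),
    sum_range_bne_succ_eq _ (stepExt_zero f)]
  have := Bool.toNat_le (stepExt f (j + 1))
  omega
end
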